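/- If p is a finitary polynomial functor (all direction-sets finite) and J is a filtered category, then for any diagram q : J → Poly the canonical map colim_j (p ◁ q_j) → p ◁ (colim_j q_j) is an isomorphism of polynomial functors, where ◁ denotes composition. -/

import Mathlib

universe v u

open CategoryTheory Limits

/-- A morphism of polynomial functors: forwards on positions, backwards on directions. -/
structure PolyHom (p q : PFunctor.{u}) : Type u where
  onPos : p.A → q.A
  onDir : ∀ a : p.A, q.B (onPos a) → p.B a

/-- The category `Poly` of polynomial endofunctors on `Set` and natural transformations
between them (presented position/direction-wise). -/
instance : Category PFunctor.{u} where
  Hom := PolyHom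
  id p := ⟨fun a => a, fun _ d => d⟩
  comp φ ψ := ⟨fun a => ψ.onPos (φ.onPos a), fun a d => φ.onDir a (ψ.onDir (φ.onPos a) d)⟩
  id_comp _ := rfl
  comp_id _ := rfl
  assoc _ _ _ := rfl

/-- Post-composition `q ↦ p ◁ q` with a fixed polynomial `p`, as a functor `Poly ⥤ Poly`.
(`PFunctor.comp p q` is the composite functor `p ∘ q`.) -/
def compL (p : PFunctor.{u}) : PFunctor.{u} ⥤ PFunctor.{u} where
  obj q := p.comp q
  map φ :=
    { onPos := fun x => ⟨x.1, fun b => φ.onPos (x.2 b)⟩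
      onDir := fun x d => ⟨d.1, φ.onDir (x.2 d.1) d.2⟩ }
  map_id _ := rfl
  map_comp _ _ := rfl

/-- Pre-composition `p ↦ p ◁ q` with a fixed polynomial `q`, as a functor `Poly ⥤ Poly`. -/
def compR (q : PFunctor.{u}) : PFunctor.{u} ⥤ PFunctor.{u} where
  obj p := p.comp q
  map φ :=
    { onPos := fun x => ⟨φ.onPos x.1, fun b => x.2 (φ.onDir x.1 b)⟩
      onDir := fun x d => ⟨φ.onDir x.1 d.1, d.2⟩ }
  map_id _ := rfl
  map_comp _ _ := rfl

/-- Evaluation of polynomial functors at a set `X`, as a functor `Poly ⥤ Set`. -/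
def evalPoly (X : Type u) : PFunctor.{u} ⥤ Type u where
  obj p := p.Obj X
  map φ := TypeCat.ofHom (fun x => ⟨φ.onPos x.1, fun d => x.2 (φ.onDir x.1 d)⟩)
  map_id _ := rfl
  map_comp _ _ := rfl

/-- A map of polynomial functors is cartesian if all the backwards maps on directions
are bijections (equivalently, all naturality squares are pullbacks). -/
def IsCartesian {p q : PFunctor.{u}} (φ : p ⟶ q) : Prop :=
  ∀ a, Function.Bijective (φ.onDir a)

/-- The wide subcategory `Poly_Cart` of polynomial functors and cartesian maps. -/
def PolyCart : Type (u + 1) := PFunctor.{u}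

instance : Category PolyCart.{u} where
  Hom p q := { φ : (show PFunctor.{u} from p) ⟶ (show PFunctor.{u} from q) // IsCartesian φ }
  id p := ⟨𝟙 _, fun _ => Function.bijective_id⟩
  comp φ ψ := ⟨φ.1 ≫ ψ.1, fun a => (φ.2 a).comp (ψ.2 (φ.1.onPos a))⟩
  id_comp _ := rfl
  comp_id _ := rfl
  assoc _ _ _ := rfl

/-- The inclusion functor `Poly_Cart ⥤ Poly`. -/
def polyCartIncl : PolyCart.{u} ⥤ PFunctor.{u} where
  obj p := p
  map φ := φ.1
  map_id _ := rfl
  map_comp _ _ := rfl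

/-!
Colimits in `Poly` are detected concretely: the positions of a colimit are the colimit of the
positions, and the directions at a position `x` are the compatible families of directions at the
positions of the diagram lying over `x`. Both facts come from the universal property, tested
against constant polynomials `X y⁰` and against the classifier `Σ_{P : Prop} y^P` of partial
sections; conversely they characterise colimit cocones.

For `p ◁ -` with `p` finitary and the diagram filtered, the positions `Σ a, p[a] → q_j(1)` form a
colimit since finite families lift to, and are identified at, a common stage. Over a position
`(a, f)` lifted to `(j₀, g₀)`, a compatible family of directions of `p ◁ q_j` has a constant first
component `b`, and its second components form a compatible family of directions of `q` at the
positions under `g₀ b`. Filteredness extends such a family uniquely to all positions over `f b`,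
two ways of reaching a position being equalized by a bowtie, and it then glues to a direction of
the colimit at `f b`.
-/

namespace CategoryTheory.Functor.CoconeTypes

universe w₀ w₁ w₂

variable {J : Type v} [Category.{v} J] {F : J ⥤ Type w₀} {c : CoconeTypes.{w₁} F}

/-- Unlike `IsColimitCore.isColimit`, this needs no universe bound: testing against
`Prop`-valued maps suffices. -/
theorem IsColimitCore.isColimit' (hc : IsColimitCore.{w₂} c) : c.IsColimit := by
  refine ⟨⟨?_, (descColimitType_surjective_iff c).2 fun z => ?_⟩⟩
  · intro y y' hyy'
    obtain ⟨j, x, rfl⟩ := F.ιColimitType_jointly_surjective y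
    obtain ⟨j', x', rfl⟩ := F.ιColimitType_jointly_surjective y'
    let t : CoconeTypes.{w₂} F :=
      { pt := ULift Prop
        ι k z := ⟨F.ιColimitType k z = F.ιColimitType j x⟩ }
    have h := congrArg (fun z => (hc.desc t z).down) hyy'
    simp only [descColimitType_ιColimitType_apply, IsColimitCore.fac_apply, t] at h
    exact (of_eq_true h.symm).symm
  · have h := congrFun (hc.funext (f := fun z => ULift.up.{w₂} (∃ i x, c.ι i x = z))
      (g := fun _ => ULift.up True) fun j => _root_.funext fun x => by simpa using ⟨j, x, rfl⟩) z
    simpa using h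

variable [IsFiltered J]

theorem IsColimit.exists_lift_of_finite (hc : c.IsColimit) {ι : Type*} [Finite ι]
    (f : ι → c.pt) : ∃ (j : J) (g : ι → F.obj j), ∀ i, c.ι j (g i) = f i := by
  classical
  have := Fintype.ofFinite ι
  choose j x hx using fun i => hc.ι_jointly_surjective (f i)
  obtain ⟨S, hS⟩ := IsFiltered.sup_objs_exists (Finset.univ.image j)
  have u i : j i ⟶ S := (hS (Finset.mem_image_of_mem j (Finset.mem_univ i))).some
  exact ⟨S, fun i => F.map (u i) (x i), fun i => by rw [ι_naturality_apply, hx]⟩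

theorem IsColimit.exists_map_eq_of_finite (hc : c.IsColimit) {ι : Type*} [Finite ι] {j : J}
    (g g' : ι → F.obj j) (h : ∀ i, c.ι j (g i) = c.ι j (g' i)) :
    ∃ (k : J) (u : j ⟶ k), ∀ i, F.map u (g i) = F.map u (g' i) := by
  classical
  have := Fintype.ofFinite ι
  choose k u hu using fun i =>
    (descColimitType_injective_iff_of_isFiltered' c).1 hc.bijective.1 j _ _ (h i)
  obtain ⟨S, T, hT⟩ := IsFiltered.sup_exists (insert j (Finset.univ.image k))
    (Finset.univ.image fun i => ⟨j, k i, Finset.mem_insert_self _ _,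
      Finset.mem_insert_of_mem (Finset.mem_image_of_mem k (Finset.mem_univ i)), u i⟩)
  refine ⟨S, T (Finset.mem_insert_self _ _), fun i => ?_⟩
  rw [← hT _ _ (Finset.mem_image_of_mem _ (Finset.mem_univ i)), Functor.map_comp_apply,
    Functor.map_comp_apply, hu]

end CategoryTheory.Functor.CoconeTypes

namespace PolyCat

open Functor

section Hom

variable {P Q : PFunctor.{u}}

theorem hom_ext {φ ψ : P ⟶ Q} (hpos : ∀ a, φ.onPos a = ψ.onPos a)
    (hdir : ∀ a d d', d ≍ d' → φ.onDir a d = ψ.onDir a d') : φ = ψ := by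
  obtain ⟨f, φd⟩ := φ
  obtain ⟨g, ψd⟩ := ψ
  obtain rfl : f = g := funext hpos
  obtain rfl : φd = ψd := funext fun a => funext fun d => hdir a d d .rfl
  rfl

theorem onDir_heq (φ : P ⟶ Q) {a a' : P.A} (h : a = a') {d : Q.B (φ.onPos a)}
    {d' : Q.B (φ.onPos a')} (hd : d ≍ d') : φ.onDir a d ≍ φ.onDir a' d' := by
  subst h
  rw [eq_of_heq hd]

theorem onDir_eq_of_eq {φ ψ : P ⟶ Q} (h : φ = ψ) (a : P.A) {d : Q.B (φ.onPos a)}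
    {d' : Q.B (ψ.onPos a)} (hd : d ≍ d') : φ.onDir a d = ψ.onDir a d' := by
  subst h
  rw [eq_of_heq hd]

end Hom

/-- The constant polynomial `X y⁰`: maps into it are just maps of positions. -/
def const (X : Type u) : PFunctor.{u} := ⟨X, fun _ => PEmpty⟩

def toConst {P : PFunctor.{u}} {X : Type u} (f : P.A → X) : P ⟶ const X :=
  ⟨f, fun _ d => d.elim⟩

theorem toConst_ext {P : PFunctor.{u}} {X : Type u} {φ ψ : P ⟶ const X}
    (h : ∀ a, φ.onPos a = ψ.onPos a) : φ = ψ :=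
  hom_ext h fun _ d _ _ => d.elim

def posFunctor : PFunctor.{u} ⥤ Type u where
  obj P := P.A
  map φ := TypeCat.ofHom φ.onPos

variable {J : Type v} [Category.{v} J]

theorem onPos_map_comp (F : J ⥤ PFunctor.{u}) {j k l : J} (u : j ⟶ k) (w : k ⟶ l)
    (a : (F.obj j).A) : (F.map (u ≫ w)).onPos a = (F.map w).onPos ((F.map u).onPos a) := by
  rw [F.map_comp]; rfl

theorem onDir_map_comp (F : J ⥤ PFunctor.{u}) {j k l : J} (u : j ⟶ k) (w : k ⟶ l)
    (a : (F.obj j).A) {d : (F.obj l).B ((F.map (u ≫ w)).onPos a)}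
    {d' : (F.obj l).B ((F.map w).onPos ((F.map u).onPos a))} (hd : d ≍ d') :
    (F.map (u ≫ w)).onDir a d = (F.map u).onDir a ((F.map w).onDir _ d') :=
  onDir_eq_of_eq (F.map_comp u w) a hd

theorem onDir_map_id (F : J ⥤ PFunctor.{u}) {j : J} (a : (F.obj j).A)
    (d : (F.obj j).B ((F.map (𝟙 j)).onPos a)) : (F.map (𝟙 j)).onDir a d ≍ d := by
  have := onDir_eq_of_eq (F.map_id j) a (d' := cast (by rw [F.map_id]) d) (cast_heq _ _).symm
  rw [this]
  exact cast_heq _ _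

section Positions

variable {F : J ⥤ PFunctor.{u}}

theorem onPos_ι_map (c : Cocone F) {j k : J} (u : j ⟶ k) (a : (F.obj j).A) :
    (c.ι.app k).onPos ((F.map u).onPos a) = (c.ι.app j).onPos a :=
  congrArg (·.onPos a) (c.w u)

def posCoconeTypes (c : Cocone F) : (F ⋙ posFunctor).CoconeTypes where
  pt := c.pt.A
  ι j := (c.ι.app j).onPos
  ι_naturality u := funext (onPos_ι_map c u)

def constCocone (t : CoconeTypes.{u} (F ⋙ posFunctor)) : Cocone F where
  pt := const t.pt
  ι :=
    { app j := toConst (t.ι j)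
      naturality _ _ u := toConst_ext fun a => t.ι_naturality_apply u a }

noncomputable def isColimitCorePosCoconeTypes {c : Cocone F} (hc : IsColimit c) :
    (posCoconeTypes c).IsColimitCore.{u} where
  desc t := (hc.desc (constCocone t)).onPos
  fac t j := congrArg PolyHom.onPos (hc.fac (constCocone t) j)
  funext {_ f g} h := congrArg PolyHom.onPos <| hc.hom_ext (f := toConst f) (f' := toConst g)
    fun j => toConst_ext (congrFun (h j))

theorem isColimit_posCoconeTypes {c : Cocone F} (hc : IsColimit c) :
    (posCoconeTypes c).IsColimit :=
  (isColimitCorePosCoconeTypes hc).isColimit'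

end Positions

section Directions

variable {F : J ⥤ PFunctor.{u}}

abbrev FiberFamily (c : Cocone F) (x : c.pt.A) : Type (max u v) :=
  ∀ j (a : (F.obj j).A), (c.ι.app j).onPos a = x → (F.obj j).B a

def FiberFamily.IsCompatible {c : Cocone F} {x : c.pt.A} (fam : FiberFamily c x) : Prop :=
  ∀ ⦃j k : J⦄ (u : j ⟶ k) a h h', fam j a h = (F.map u).onDir a (fam k ((F.map u).onPos a) h')

def dirRestrict (c : Cocone F) {x : c.pt.A} (d : c.pt.B x) : FiberFamily c x :=
  fun j a h => (c.ι.app j).onDir a (cast (congrArg c.pt.B h.symm) d)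

theorem isCompatible_dirRestrict (c : Cocone F) {x : c.pt.A} (d : c.pt.B x) :
    (dirRestrict c d).IsCompatible := by
  intro j k u a h h'
  subst h
  exact (onDir_eq_of_eq (c.w u) a (cast_heq _ _)).symm

/-- `Σ_{P : Prop} y^P`: a map `X ⟶ partialSectionClassifier` is a choice of a set of positions
of `X` together with a direction at each of them. -/
abbrev partialSectionClassifier : PFunctor.{u} := ⟨ULift Prop, fun P => ULift (PLift P.down)⟩

theorem partialSectionClassifier_heq {P Q : ULift Prop} (h : P = Q)
    (p : partialSectionClassifier.{u}.B P) (q : partialSectionClassifier.{u}.B Q) : p ≍ q := by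
  subst h
  exact heq_of_eq (Subsingleton.elim p q)

def pointSection (X : PFunctor.{u}) (x : X.A) (d : X.B x) : X ⟶ partialSectionClassifier :=
  ⟨fun a => ⟨a = x⟩, fun _ h => cast (congrArg X.B h.down.down.symm) d⟩

theorem dirRestrict_injective {c : Cocone F} (hc : IsColimit c) (x : c.pt.A) :
    Function.Injective (dirRestrict c (x := x)) := by
  intro d d' hdd'
  have hσ : pointSection c.pt x d = pointSection c.pt x d' := by
    refine hc.hom_ext fun j => hom_ext (fun _ => rfl) fun a h h' hh => ?_
    cases eq_of_heq hh
    exact congrFun (congrFun (congrFun hdd' j) a) h.down.down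
  exact onDir_eq_of_eq hσ x (d := ⟨⟨rfl⟩⟩) (d' := ⟨⟨rfl⟩⟩) .rfl

def partialSectionCocone {c : Cocone F} {x : c.pt.A} (fam : FiberFamily c x)
    (hfam : fam.IsCompatible) : Cocone F where
  pt := partialSectionClassifier
  ι :=
    { app j := ⟨fun a => ⟨(c.ι.app j).onPos a = x⟩, fun a h => fam j a h.down.down⟩
      naturality _ _ u := hom_ext (fun a => congrArg (ULift.up ∘ (· = x)) (onPos_ι_map c u a))
        fun a h h' _ => (hfam u a h'.down.down h.down.down).symm }

theorem exists_dirRestrict_eq {c : Cocone F} (hc : IsColimit c) {x : c.pt.A}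
    {fam : FiberFamily c x} (hfam : fam.IsCompatible) : ∃ d, dirRestrict c d = fam := by
  let σ : c.pt ⟶ partialSectionClassifier := hc.desc (partialSectionCocone fam hfam)
  have hσ j a : σ.onPos ((c.ι.app j).onPos a) = ⟨(c.ι.app j).onPos a = x⟩ :=
    congrArg (·.onPos a) (hc.fac (partialSectionCocone fam hfam) j)
  obtain ⟨j₀, a₀, h₀⟩ := (isColimit_posCoconeTypes hc).ι_jointly_surjective x
  have hσx : σ.onPos x = ⟨x = x⟩ := h₀ ▸ hσ j₀ a₀
  let d := σ.onDir x ⟨⟨by rw [hσx]⟩⟩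
  refine ⟨d, funext fun j => funext fun a => funext fun h => ?_⟩
  calc dirRestrict c d j a h
      = (c.ι.app j ≫ σ).onDir a ⟨⟨show (σ.onPos _).down by rw [hσ]; exact h⟩⟩ :=
        congrArg _ (eq_of_heq ((cast_heq _ _).trans
          (onDir_heq σ h.symm (partialSectionClassifier_heq (by rw [h]) _ _))))
    _ = fam j a h := onDir_eq_of_eq (hc.fac (partialSectionCocone fam hfam) j) a (d' := ⟨⟨h⟩⟩)
        (partialSectionClassifier_heq
          (congrArg (·.onPos a) (hc.fac (partialSectionCocone fam hfam) j)) _ _)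

end Directions

section Criterion

variable {F : J ⥤ PFunctor.{u}} {c : Cocone F} (hpos : (posCoconeTypes c).IsColimit)

noncomputable def descFamily (s : Cocone F) {x : c.pt.A}
    (e : s.pt.B (hpos.desc (posCoconeTypes s) x)) : FiberFamily c x :=
  fun j a h => dirRestrict s e j a (h ▸ (hpos.fac_apply (posCoconeTypes s) j a).symm)

theorem isCompatible_descFamily (s : Cocone F) {x : c.pt.A}
    (e : s.pt.B (hpos.desc (posCoconeTypes s) x)) : (descFamily hpos s e).IsCompatible :=
  fun _ _ u a _ _ => isCompatible_dirRestrict s e u a _ _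

noncomputable def isColimitOfDirRestrict
    (hdir : ∀ x (fam : FiberFamily c x), fam.IsCompatible → ∃! d, dirRestrict c d = fam) :
    IsColimit c where
  desc s := ⟨hpos.desc (posCoconeTypes s),
    fun x e => (hdir x _ (isCompatible_descFamily hpos s e)).exists.choose⟩
  fac s j := hom_ext (hpos.fac_apply _ j) fun a e e' he =>
    (congrFun (congrFun (congrFun
      (hdir _ _ (isCompatible_descFamily hpos s e)).exists.choose_spec j) a) rfl).trans
      (congrArg _ (eq_of_heq ((cast_heq _ _).trans he)))
  uniq s m hm := by
    refine hom_ext (fun x => congrFun (hpos.funext fun j => funext fun a =>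
      (congrArg (·.onPos a) (hm j)).trans (hpos.fac_apply (posCoconeTypes s) j a).symm) x)
      fun x e e' he => ?_
    refine (hdir x _ (isCompatible_descFamily hpos s e')).unique ?_
      (hdir x _ (isCompatible_descFamily hpos s e')).exists.choose_spec
    funext j a h
    subst h
    exact onDir_eq_of_eq (hm j) a (he.trans (cast_heq _ _).symm)

end Criterion

section Filtered

variable {F : J ⥤ PFunctor.{u}} {c : Cocone F}

abbrev UnderFamily (F : J ⥤ PFunctor.{u}) (j₀ : J) (a₀ : (F.obj j₀).A) : Type (max u v) :=
  ∀ k (u : j₀ ⟶ k) (a : (F.obj k).A), (F.map u).onPos a₀ = a → (F.obj k).B a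

namespace UnderFamily

variable {j₀ : J} {a₀ : (F.obj j₀).A} (D : UnderFamily F j₀ a₀)

def IsCompatible : Prop :=
  ∀ ⦃k l : J⦄ (u : j₀ ⟶ k) (w : k ⟶ l) a h h',
    D k u a h = (F.map w).onDir a (D l (u ≫ w) ((F.map w).onPos a) h')

variable {D}

theorem congr_heq {k : J} {u u' : j₀ ⟶ k} (hu : u = u') {a a' : (F.obj k).A} (ha : a = a')
    (h : (F.map u).onPos a₀ = a) (h' : (F.map u').onPos a₀ = a') : D k u a h ≍ D k u' a' h' := by
  subst hu ha
  rfl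

theorem IsCompatible.onDir_eq_onDir_comp (hD : D.IsCompatible) {j k l : J} (a : (F.obj j).A)
    (u : j₀ ⟶ k) (v : j ⟶ k) (w : k ⟶ l) (h : (F.map u).onPos a₀ = (F.map v).onPos a)
    (h' : (F.map (u ≫ w)).onPos a₀ = (F.map (v ≫ w)).onPos a) :
    (F.map v).onDir a (D k u _ h) = (F.map (v ≫ w)).onDir a (D l (u ≫ w) _ h') := by
  rw [hD u w _ h (by rw [← onPos_map_comp, h', onPos_map_comp])]
  exact (onDir_map_comp F v w a (congr_heq rfl (onPos_map_comp F v w a) _ _)).symm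

end UnderFamily

variable [IsFiltered J]

theorem exists_map_onPos_eq (hpos : (posCoconeTypes c).IsColimit) {j j' : J}
    {a : (F.obj j).A} {a' : (F.obj j').A} (h : (c.ι.app j).onPos a = (c.ι.app j').onPos a') :
    ∃ (k : J) (u : j ⟶ k) (u' : j' ⟶ k), (F.map u).onPos a = (F.map u').onPos a' :=
  (CoconeTypes.descColimitType_injective_iff_of_isFiltered _).1 hpos.bijective.1 j j' a a' h

theorem FiberFamily.ext_of_under (hpos : (posCoconeTypes c).IsColimit) {x : c.pt.A}
    {fam₁ fam₂ : FiberFamily c x} (h₁ : fam₁.IsCompatible) (h₂ : fam₂.IsCompatible) {j₀ : J}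
    {a₀ : (F.obj j₀).A} (h₀ : (c.ι.app j₀).onPos a₀ = x)
    (h : ∀ k (u : j₀ ⟶ k) a, (F.map u).onPos a₀ = a → ∀ ha, fam₁ k a ha = fam₂ k a ha) :
    fam₁ = fam₂ := by
  funext j a ha
  obtain ⟨k, u, v, huv⟩ := exists_map_onPos_eq hpos (a := a₀) (a' := a) (h₀.trans ha.symm)
  have hk := (onPos_ι_map c v a).trans ha
  rw [h₁ v a ha hk, h₂ v a ha hk, h k u _ huv]

namespace UnderFamily

variable {j₀ : J} {a₀ : (F.obj j₀).A} {D : UnderFamily F j₀ a₀}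

/-- The two cospans are equalized by a common bowtie. -/
theorem IsCompatible.onDir_eq_onDir (hD : D.IsCompatible) {j : J} (a : (F.obj j).A) {k k' : J}
    (u : j₀ ⟶ k) (v : j ⟶ k) (u' : j₀ ⟶ k') (v' : j ⟶ k')
    (h : (F.map u).onPos a₀ = (F.map v).onPos a)
    (h' : (F.map u').onPos a₀ = (F.map v').onPos a) :
    (F.map v).onDir a (D k u _ h) = (F.map v').onDir a (D k' u' _ h') := by
  obtain ⟨s, α, β, hu, hv⟩ := IsFiltered.bowtie u u' v v'
  have hα : (F.map (u ≫ α)).onPos a₀ = (F.map (v ≫ α)).onPos a := by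
    rw [onPos_map_comp, onPos_map_comp, h]
  have hβ : (F.map (u' ≫ β)).onPos a₀ = (F.map (v' ≫ β)).onPos a := by
    rw [onPos_map_comp, onPos_map_comp, h']
  rw [hD.onDir_eq_onDir_comp a u v α h hα, hD.onDir_eq_onDir_comp a u' v' β h' hβ]
  exact onDir_eq_of_eq (by rw [hv]) a (congr_heq hu (by rw [hv]) _ _)

section Extend

variable (hpos : (posCoconeTypes c).IsColimit) {x : c.pt.A}
  (h₀ : (c.ι.app j₀).onPos a₀ = x)

noncomputable def extend (D : UnderFamily F j₀ a₀) : FiberFamily c x := fun _ a ha =>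
  have H := exists_map_onPos_eq hpos (a := a₀) (a' := a) (h₀.trans ha.symm)
  (F.map H.choose_spec.choose_spec.choose).onDir a
    (D _ H.choose_spec.choose _ H.choose_spec.choose_spec.choose_spec)

variable {hpos h₀}

theorem IsCompatible.extend_eq (hD : D.IsCompatible) {j k : J} {a : (F.obj j).A}
    (ha : (c.ι.app j).onPos a = x) (u : j₀ ⟶ k) (v : j ⟶ k)
    (h : (F.map u).onPos a₀ = (F.map v).onPos a) :
    D.extend hpos h₀ j a ha = (F.map v).onDir a (D k u _ h) :=
  hD.onDir_eq_onDir a _ _ u v _ h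

theorem IsCompatible.extend_eq_of_under (hD : D.IsCompatible) {k : J} (u : j₀ ⟶ k)
    {a : (F.obj k).A} (h : (F.map u).onPos a₀ = a) (ha : (c.ι.app k).onPos a = x) :
    D.extend hpos h₀ k a ha = D k u a h := by
  rw [hD.extend_eq ha u (𝟙 k) (h.trans (by rw [F.map_id]; rfl))]
  exact eq_of_heq ((onDir_map_id F a _).trans (congr_heq rfl (by rw [F.map_id]; rfl) _ _))

theorem IsCompatible.isCompatible_extend (hD : D.IsCompatible) :
    (D.extend hpos h₀).IsCompatible := by
  intro j l w a ha ha'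
  obtain ⟨k, u, v, h⟩ := exists_map_onPos_eq hpos (a := a₀) (a' := (F.map w).onPos a)
    (h₀.trans ha'.symm)
  rw [hD.extend_eq ha' u v h, hD.extend_eq ha u (w ≫ v) (h.trans (onPos_map_comp F w v a).symm)]
  exact onDir_map_comp F w v a (congr_heq rfl (onPos_map_comp F w v a) _ _)

end Extend

end UnderFamily

theorem exists_dirRestrict_eq_of_under (hc : IsColimit c) {j₀ : J}
    {a₀ : (F.obj j₀).A} {D : UnderFamily F j₀ a₀} (hD : D.IsCompatible) :
    ∃ d : c.pt.B ((c.ι.app j₀).onPos a₀),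
      ∀ k (u : j₀ ⟶ k) a h ha, dirRestrict c d k a ha = D k u a h := by
  obtain ⟨d, hd⟩ := exists_dirRestrict_eq hc
    (hD.isCompatible_extend (hpos := isColimit_posCoconeTypes hc) (h₀ := rfl))
  exact ⟨d, fun k u a h ha => hd ▸ hD.extend_eq_of_under u h ha⟩

end Filtered

section CompL

variable {p : PFunctor.{u}} {q : J ⥤ PFunctor.{u}} {c : Cocone q}

theorem dirRestrict_mapCocone_compL {a : p.A} {f : p.B a → c.pt.A} (b : p.B a)
    (d : c.pt.B (f b)) {j : J} (g : p.B a → (q.obj j).A)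
    (h : ((compL p).map (c.ι.app j)).onPos ⟨a, g⟩ = ⟨a, f⟩)
    (hg : ∀ b, (c.ι.app j).onPos (g b) = f b) :
    dirRestrict ((compL p).mapCocone c) (x := ⟨a, f⟩) ⟨b, d⟩ j ⟨a, g⟩ h =
      ⟨b, dirRestrict c d j (g b) (hg b)⟩ := by
  obtain rfl : (fun b => (c.ι.app j).onPos (g b)) = f := funext hg
  rfl

theorem onPos_ι_mapCocone_compL {a : p.A} {j₀ k : J} (g₀ : p.B a → (q.obj j₀).A)
    (u : j₀ ⟶ k) :
    (((compL p).mapCocone c).ι.app k).onPos ⟨a, fun b => (q.map u).onPos (g₀ b)⟩ =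
      ⟨a, fun b => (c.ι.app j₀).onPos (g₀ b)⟩ :=
  onPos_ι_map ((compL p).mapCocone c) u (⟨a, g₀⟩ : ((q ⋙ compL p).obj j₀).A)

section Under

variable {a : p.A} {j₀ : J} {g₀ : p.B a → (q.obj j₀).A}
  {fam : FiberFamily ((compL p).mapCocone c) ⟨a, fun b => (c.ι.app j₀).onPos (g₀ b)⟩}

theorem FiberFamily.IsCompatible.fst_eq_of_under (hfam : fam.IsCompatible) {k : J}
    (u : j₀ ⟶ k) (h) :
    (fam k ⟨a, fun b => (q.map u).onPos (g₀ b)⟩ h).1 = (fam j₀ ⟨a, g₀⟩ rfl).1 :=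
  (congrArg Sigma.fst (hfam u ⟨a, g₀⟩ rfl h)).symm

/-- The directions of `q` under `g₀ b`, where `b` is the common first component of `fam`. -/
noncomputable def compLUnderFamily (hfam : fam.IsCompatible) :
    UnderFamily q j₀ (g₀ (fam j₀ ⟨a, g₀⟩ rfl).1) := fun k u _ h =>
  cast (congrArg (q.obj k).B ((congrArg (fun b => (q.map u).onPos (g₀ b))
      (hfam.fst_eq_of_under u (onPos_ι_mapCocone_compL g₀ u))).trans h))
    (fam k _ (onPos_ι_mapCocone_compL g₀ u)).2

theorem isCompatible_compLUnderFamily (hfam : fam.IsCompatible) :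
    (compLUnderFamily hfam).IsCompatible := by
  intro k l u w a' h h'
  have hl := (onPos_ι_map ((compL p).mapCocone c) w _).trans (onPos_ι_mapCocone_compL g₀ u)
  obtain ⟨E₁, E₂⟩ := Sigma.ext_iff.1 (hfam w ⟨a, fun b => (q.map u).onPos (g₀ b)⟩
    (onPos_ι_mapCocone_compL g₀ u) hl)
  have hsnd : ∀ (y y' : ((q ⋙ compL p).obj l).A) (_ : y = y') hy hy',
      (fam l y hy).2 ≍ (fam l y' hy').2 := by
    rintro _ _ rfl _ _
    rfl
  refine eq_of_heq ((cast_heq _ _).trans (E₂.trans (onDir_heq (q.map w) ?_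
    ((hsnd _ _ (congrArg (Sigma.mk a) (funext fun b => (onPos_map_comp q u w (g₀ b)).symm))
      hl _).trans (cast_heq _ _).symm))))
  change (q.map u).onPos (g₀ (fam l _ hl).1) = a'
  rw [← h, ← hfam.fst_eq_of_under u
    (onPos_ι_mapCocone_compL g₀ u)]
  exact congrArg (fun b => (q.map u).onPos (g₀ b)) E₁.symm

end Under

variable [IsFiltered J]

theorem isColimit_posCoconeTypes_mapCocone_compL (hp : ∀ a : p.A, Finite (p.B a))
    (hpos : (posCoconeTypes c).IsColimit) :
    (posCoconeTypes ((compL p).mapCocone c)).IsColimit := by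
  refine ⟨⟨(CoconeTypes.descColimitType_injective_iff_of_isFiltered' _).2 ?_,
    (CoconeTypes.descColimitType_surjective_iff _).2 ?_⟩⟩
  · rintro j ⟨a, g⟩ ⟨a', g'⟩ h
    obtain ⟨rfl, hgg'⟩ := Sigma.mk.inj_iff.1 h
    have := hp a
    obtain ⟨k, u, hu⟩ := hpos.exists_map_eq_of_finite g g' (congrFun (eq_of_heq hgg'))
    exact ⟨k, u, congrArg (Sigma.mk a) (funext hu)⟩
  · rintro ⟨a, f⟩
    have := hp a
    obtain ⟨j, g, hg⟩ := hpos.exists_lift_of_finite f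
    exact ⟨j, ⟨a, g⟩, congrArg (Sigma.mk a) (funext hg)⟩

theorem dirRestrict_mapCocone_compL_injective (hp : ∀ a : p.A, Finite (p.B a))
    (hc : IsColimit c) (x : ((compL p).mapCocone c).pt.A) :
    Function.Injective (dirRestrict ((compL p).mapCocone c) (x := x)) := by
  obtain ⟨a, f⟩ := x
  have := hp a
  obtain ⟨j₀, g₀, hg₀⟩ := (isColimit_posCoconeTypes hc).exists_lift_of_finite f
  obtain rfl : (fun b => (c.ι.app j₀).onPos (g₀ b)) = f := funext hg₀
  rintro ⟨b, d⟩ ⟨b', d'⟩ h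
  obtain rfl : b = b' := congrArg Sigma.fst (congrFun (congrFun (congrFun h j₀) ⟨a, g₀⟩) rfl)
  refine congrArg (Sigma.mk b) (dirRestrict_injective hc _ (FiberFamily.ext_of_under
    (isColimit_posCoconeTypes hc) (isCompatible_dirRestrict c d) (isCompatible_dirRestrict c d')
    rfl ?_))
  rintro k u _ rfl ha
  have hu := congrFun (congrFun (congrFun h k) ⟨a, fun b => (q.map u).onPos (g₀ b)⟩)
    (onPos_ι_mapCocone_compL g₀ u)
  have hg b := onPos_ι_map c u (g₀ b)
  exact eq_of_heq (Sigma.mk.inj ((dirRestrict_mapCocone_compL b d _ _ hg).symm.trans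
    (hu.trans (dirRestrict_mapCocone_compL b d' _ _ hg)))).2

theorem exists_dirRestrict_mapCocone_compL_eq (hp : ∀ a : p.A, Finite (p.B a))
    (hc : IsColimit c) {x : ((compL p).mapCocone c).pt.A}
    {fam : FiberFamily ((compL p).mapCocone c) x} (hfam : fam.IsCompatible) :
    ∃ D, dirRestrict ((compL p).mapCocone c) D = fam := by
  obtain ⟨a, f⟩ := x
  have := hp a
  obtain ⟨j₀, g₀, hg₀⟩ := (isColimit_posCoconeTypes hc).exists_lift_of_finite f
  obtain rfl : (fun b => (c.ι.app j₀).onPos (g₀ b)) = f := funext hg₀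
  obtain ⟨d, hd⟩ := exists_dirRestrict_eq_of_under hc (isCompatible_compLUnderFamily hfam)
  refine ⟨⟨_, d⟩, FiberFamily.ext_of_under
    (isColimit_posCoconeTypes_mapCocone_compL hp (isColimit_posCoconeTypes hc))
    (isCompatible_dirRestrict _ _) hfam (a₀ := (⟨a, g₀⟩ : ((q ⋙ compL p).obj j₀).A)) rfl ?_⟩
  rintro k u _ rfl hy
  refine (dirRestrict_mapCocone_compL _ d _ hy (fun b => onPos_ι_map c u (g₀ b))).trans
    (Sigma.ext (hfam.fst_eq_of_under u hy).symm ?_)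
  rw [hd k u _ rfl]
  exact cast_heq _ _

end CompL

end PolyCat

/-- If `p` is a finitary polynomial functor (all direction-sets finite)
and `J` is a filtered category, then for any diagram `q : J ⥤ Poly` the canonical map
`colim_j (p ◁ q_j) → p ◁ (colim_j q_j)` is an isomorphism; equivalently, `p ◁ -`
preserves filtered colimits: the image under `p ◁ -` of any colimit cocone on `q`
is again a colimit cocone. -/
theorem compL_preserves_filtered_colimits {J : Type v} [Category.{v} J] [IsFiltered J]
    (p : PFunctor.{u}) (hp : ∀ a : p.A, Finite (p.B a))
    (q : J ⥤ PFunctor.{u}) (c : Cocone q) (hc : IsColimit c) :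
    Nonempty (IsColimit ((compL p).mapCocone c)) :=
  ⟨PolyCat.isColimitOfDirRestrict (PolyCat.isColimit_posCoconeTypes_mapCocone_compL hp
    (PolyCat.isColimit_posCoconeTypes hc)) fun x _ hfam =>
      have ⟨D, hD⟩ := PolyCat.exists_dirRestrict_mapCocone_compL_eq hp hc hfam
      ⟨D, hD, fun _ hD' =>
        PolyCat.dirRestrict_mapCocone_compL_injective hp hc x (hD'.trans hD.symm)⟩⟩
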